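/- arXiv:2111.04370 — 4 statements merged into one kernel-verified Lean document; each statement's English description precedes it below -/
import Mathlib

section
/- Let V be a real vector space equipped with a hypercomplex structure H = {J₁, J₂, J₃} (three anticommuting complex structures with J₁J₂ = J₃) and a nondegenerate alternating bilinear form ω satisfying ω(Jₐx, Jₐy) = ω(x, y) for a = 1,2,3. Then the symmetric 4-tensor Φ := Σₐ gₐ ⊙ gₐ, where gₐ(x,y) := ω(x, Jₐy), is independent of the choice of admissible basis: if {J₁', J₂', J₃'} is another triple obtained from {J₁, J₂, J₃} by a rotation A ∈ SO(3) (i.e., Jₐ' = Σ_b A_{ab} J_b), then Σₐ gₐ' ⊙ gₐ' = Σₐ gₐ ⊙ gₐ. -/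
open scoped BigOperators

/-- The symmetric product of two (symmetric) bilinear forms, as a symmetric 4-tensor. -/
noncomputable def symProd {V : Type*} (p q : V → V → ℝ) (x y z w : V) : ℝ :=
  (1 / 6 : ℝ) * (p x y * q z w + p x z * q y w + p x w * q y z +
    p y z * q x w + p y w * q x z + p z w * q x y)

/-- The fundamental symmetric 4-tensor `Φ = Σₐ gₐ ⊙ gₐ`, where `gₐ(x,y) = ω(x, Jₐ y)`,
is independent of the rotation of the admissible hypercomplex basis by `A ∈ SO(3)`. -/
theorem stmt_0 {V : Type*} [AddCommGroup V] [Module ℝ V]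
    (J : Fin 3 → V →ₗ[ℝ] V)
    (hJsq : ∀ a x, J a (J a x) = -x)
    (hJ12 : ∀ x, J 0 (J 1 x) = J 2 x)
    (hJ21 : ∀ x, J 1 (J 0 x) = -(J 2 x))
    (ω : V →ₗ[ℝ] V →ₗ[ℝ] ℝ)
    (halt : ∀ x, ω x x = 0)
    (hnd : ∀ x, (∀ y, ω x y = 0) → x = 0)
    (hcompat : ∀ a x y, ω (J a x) (J a y) = ω x y)
    (A : Matrix (Fin 3) (Fin 3) ℝ)
    (horth : A.transpose * A = 1) (hdet : A.det = 1) :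
    ∀ x y z w : V,
      (∑ a, symProd (fun u v => ω u ((∑ b, A a b • J b) v))
          (fun u v => ω u ((∑ b, A a b • J b) v)) x y z w) =
      ∑ a, symProd (fun u v => ω u (J a v)) (fun u v => ω u (J a v)) x y z w := by
  intro x y z w
  have key : ∀ b c : Fin 3, (∑ a, A a b * A a c) = if b = c then (1:ℝ) else 0 := by
    intro b c
    have h : (A.transpose * A) b c = (1 : Matrix (Fin 3) (Fin 3) ℝ) b c := by rw [horth]
    simpa [Matrix.mul_apply, Matrix.one_apply, Matrix.transpose_apply] using h
  have hexp : ∀ (a : Fin 3) (u v : V),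
      ω u ((∑ b, A a b • J b) v) = ∑ b, A a b * ω u (J b v) := by
    intro a u v
    simp [LinearMap.sum_apply, LinearMap.smul_apply, map_sum, map_smul]
  have hsym : ∀ a : Fin 3,
      symProd (fun u v => ω u ((∑ b, A a b • J b) v))
        (fun u v => ω u ((∑ b, A a b • J b) v)) x y z w
      = ∑ b, ∑ c, A a b * A a c *
          symProd (fun u v => ω u (J b v)) (fun u v => ω u (J c v)) x y z w := by
    intro a
    simp only [symProd]
    simp only [hexp]
    simp only [Fin.sum_univ_three]
    ring
  calc (∑ a, symProd (fun u v => ω u ((∑ b, A a b • J b) v))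
          (fun u v => ω u ((∑ b, A a b • J b) v)) x y z w)
      = ∑ b, ∑ c, (∑ a, A a b * A a c) *
          symProd (fun u v => ω u (J b v)) (fun u v => ω u (J c v)) x y z w := by
        simp only [hsym]
        rw [Finset.sum_comm]
        refine Finset.sum_congr rfl fun b _ => ?_
        rw [Finset.sum_comm]
        refine Finset.sum_congr rfl fun c _ => ?_
        rw [← Finset.sum_mul]
    _ = ∑ a, symProd (fun u v => ω u (J a v)) (fun u v => ω u (J a v)) x y z w := by
        simp only [key, ite_mul, one_mul, zero_mul, Finset.sum_ite_eq, Finset.mem_univ,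
          if_true]
end

section
/- The first prolongation of the Lie algebra gl(n, ℍ) ⊂ gl(4n, ℝ) is trivial: if A : ℝ^{4n} → gl(n, ℍ) is a linear map such that A(x)y = A(y)x for all x, y ∈ ℝ^{4n}, then A = 0. -/
/-- The first prolongation of `gl(n,ℍ) ⊂ gl(4n,ℝ)` is trivial: identifying `ℝ^{4n} ≅ ℍⁿ`
via three anticommuting complex structures `J₁, J₂, J₃` with `J₁J₂ = J₃`, if
`A : V → gl(n,ℍ)` is linear (i.e. each `A x` commutes with every `Jₐ`) and satisfies
`A(x)y = A(y)x` for all `x, y`, then `A = 0`. -/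
theorem stmt_4 {V : Type*} [AddCommGroup V] [Module ℝ V]
    (J : Fin 3 → V →ₗ[ℝ] V)
    (hJsq : ∀ a x, J a (J a x) = -x)
    (hJ12 : ∀ x, J 0 (J 1 x) = J 2 x)
    (hJ21 : ∀ x, J 1 (J 0 x) = -(J 2 x))
    (A : V →ₗ[ℝ] V →ₗ[ℝ] V)
    (hquat : ∀ (x : V) (a : Fin 3) (y : V), A x (J a y) = J a (A x y))
    (hsymm : ∀ x y, A x y = A y x) :
    A = 0 := by
  have key : ∀ x y : V, J 2 (A x y) = -(J 2 (A x y)) := by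
    intro x y
    have h1 : A (J 0 x) (J 1 y) = J 2 (A x y) := by
      rw [hsymm, hquat, hsymm, hquat, hJ12]
    have h2 : A (J 0 x) (J 1 y) = -(J 2 (A x y)) := by
      rw [hquat, hsymm (J 0 x) y, hquat, hJ21, hsymm y x]
    exact h1.symm.trans h2
  have hz : ∀ x y : V, A x y = 0 := by
    intro x y
    have h2 : J 2 (A x y) = 0 := by
      have h := key x y
      have : J 2 (A x y) + J 2 (A x y) = 0 := by nth_rewrite 1 [h]; simp
      have := two_smul ℝ (J 2 (A x y)) ▸ this
      have h3 : (2:ℝ) • J 2 (A x y) = 0 := by rw [two_smul]; exact ‹J 2 (A x y) + J 2 (A x y) = 0›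
      exact (smul_eq_zero.mp h3).resolve_left (by norm_num)
    have h4 := congrArg (J 2) h2
    rw [hJsq, map_zero] at h4
    exact neg_eq_zero.mp h4
  ext x y
  simp [hz]
end

section
/- Let V = ℝ^{4n} with standard hypercomplex structure {J₁,J₂,J₃} and ω₀. The (3,1)-tensor ĥ₀ := id ⊗ ω₀⁻¹ + Σₐ Jₐ ⊗ g_{Jₐ}⁻¹ is independent of the choice of admissible hypercomplex basis: if {J₁',J₂',J₃'} is obtained from {J₁,J₂,J₃} by a rotation A ∈ SO(3) (Jₐ' = Σ_b A_{ab} J_b), then id ⊗ ω₀⁻¹ + Σₐ Jₐ' ⊗ (g_{Jₐ'})⁻¹ = ĥ₀. -/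
open scoped BigOperators

/-- The `(3,1)`-tensor `ĥ₀ := id ⊗ ω₀⁻¹ + Σₐ Jₐ ⊗ g_{Jₐ}⁻¹`, viewed as the bilinear map
`V* × V* → End(V)`, `(ξ,η) ↦ ξ(ω♯η) • id + Σₐ ξ(gₐ♯η) • Jₐ`, is independent of the
admissible hypercomplex basis: it is unchanged when `{Jₐ}` is rotated by `A ∈ SO(3)`.
Here `ω♯` and `gₐ♯` are the inverses of the musical maps of `ω₀` and `g_{Jₐ}`. -/
theorem stmt_9 {V : Type*} [AddCommGroup V] [Module ℝ V]
    (J : Fin 3 → V →ₗ[ℝ] V)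
    (hJsq : ∀ a x, J a (J a x) = -x)
    (hJ12 : ∀ x, J 0 (J 1 x) = J 2 x)
    (hJ21 : ∀ x, J 1 (J 0 x) = -(J 2 x))
    (ω : V →ₗ[ℝ] V →ₗ[ℝ] ℝ)
    (halt : ∀ x, ω x x = 0)
    (hnd : ∀ x, (∀ y, ω x y = 0) → x = 0)
    (hcompat : ∀ a x y, ω (J a x) (J a y) = ω x y)
    -- the inverse `ω♯` of `ω` and the inverses `gₐ♯` of the metrics `g_{Jₐ}(x,y) = ω(x,Jₐy)`
    (ωsharp : Module.Dual ℝ V →ₗ[ℝ] V)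
    (hωsharp : ∀ (ξ : Module.Dual ℝ V) (x : V), ω x (ωsharp ξ) = ξ x)
    (gsharp : Fin 3 → (Module.Dual ℝ V →ₗ[ℝ] V))
    (hgsharp : ∀ (a : Fin 3) (ξ : Module.Dual ℝ V) (x : V), ω x (J a (gsharp a ξ)) = ξ x)
    -- a rotation `A ∈ SO(3)` producing the admissible basis `Jₐ' = Σ_b A_{ab} J_b`
    (A : Matrix (Fin 3) (Fin 3) ℝ)
    (horth : A.transpose * A = 1) (hdet : A.det = 1)
    -- the inverses `gₐ'♯` of the rotated metrics `g_{Jₐ'}`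
    (gsharp' : Fin 3 → (Module.Dual ℝ V →ₗ[ℝ] V))
    (hgsharp' : ∀ (a : Fin 3) (ξ : Module.Dual ℝ V) (x : V),
      ω x ((∑ b, A a b • J b) (gsharp' a ξ)) = ξ x) :
    ∀ ξ η : Module.Dual ℝ V,
      (ξ (ωsharp η)) • (LinearMap.id : V →ₗ[ℝ] V)
          + ∑ a, (ξ (gsharp' a η)) • (∑ b, A a b • J b)
      = (ξ (ωsharp η)) • (LinearMap.id : V →ₗ[ℝ] V)
          + ∑ a, (ξ (gsharp a η)) • J a := by
  -- antisymmetry of ω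
  have hanti : ∀ x y : V, ω x y = -ω y x := by
    intro x y
    have h := halt (x + y)
    simp only [map_add, LinearMap.add_apply, halt] at h
    linarith
  -- nondegeneracy in the second variable
  have hinj : ∀ u : V, (∀ x, ω x u = 0) → u = 0 := by
    intro u hu
    apply hnd
    intro y
    rw [hanti]
    simp [hu y]
  have hωinj : ∀ u w : V, (∀ x, ω x u = ω x w) → u = w := by
    intro u w h
    have h0 : u - w = 0 := hinj _ (fun x => by simp [h x])
    exact sub_eq_zero.mp h0
  -- the quaternionic multiplication table
  have h21 : ∀ x, J 2 (J 1 x) = -(J 0 x) := by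
    intro x
    rw [← hJ12 (J 1 x), hJsq, map_neg]
  have h12 : ∀ x, J 1 (J 2 x) = J 0 x := by
    intro x
    rw [← hJ12 x, hJ21 (J 1 x), h21, neg_neg]
  have h02 : ∀ x, J 0 (J 2 x) = -(J 1 x) := by
    intro x
    rw [← hJ12 x, hJsq]
  have h20 : ∀ x, J 2 (J 0 x) = J 1 x := by
    intro x
    rw [← hJ12 (J 0 x), hJ21 x, map_neg, h02, neg_neg]
  -- the rotated structures
  set J' : Fin 3 → V →ₗ[ℝ] V := fun a => ∑ b, A a b • J b with hJ'def
  have hAAT : A * A.transpose = 1 := mul_eq_one_comm.mp horth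
  have hrow : ∀ a, A a 0 * A a 0 + A a 1 * A a 1 + A a 2 * A a 2 = 1 := by
    intro a
    have h := congrFun (congrFun hAAT a) a
    rw [Matrix.mul_apply, Fin.sum_univ_three] at h
    simp [Matrix.transpose_apply, Matrix.one_apply] at h
    linarith
  have hcol : ∀ b c, A 0 b * A 0 c + A 1 b * A 1 c + A 2 b * A 2 c
      = if b = c then 1 else 0 := by
    intro b c
    have h := congrFun (congrFun horth b) c
    rw [Matrix.mul_apply, Fin.sum_univ_three] at h
    simpa [Matrix.transpose_apply, Matrix.one_apply] using h
  -- J'ₐ squares to -1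
  have hJ'sq : ∀ a x, J' a (J' a x) = -x := by
    intro a x
    have hr := hrow a
    simp only [hJ'def, LinearMap.sum_apply, LinearMap.add_apply, LinearMap.smul_apply,
      map_sum, map_add, map_smul, Fin.sum_univ_three, hJsq, hJ12, hJ21, h21, h12, h02, h20,
      smul_neg]
    match_scalars <;> ring_nf <;> linarith [hr]
  -- formula for gsharp
  have hg : ∀ (a : Fin 3) (ζ : Module.Dual ℝ V), gsharp a ζ = -(J a (ωsharp ζ)) := by
    intro a ζ
    apply hωinj
    intro x
    have h1 : ω x (gsharp a ζ) = ζ (J a x) := by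
      rw [← hcompat a x (gsharp a ζ), hgsharp]
    have h2 : ω x (J a (ωsharp ζ)) = -(ζ (J a x)) := by
      have h := hcompat a (J a x) (ωsharp ζ)
      rw [hJsq, hωsharp, map_neg, LinearMap.neg_apply] at h
      linarith
    rw [h1, map_neg, h2, neg_neg]
  -- formula for gsharp'
  have hg' : ∀ (a : Fin 3) (ζ : Module.Dual ℝ V), gsharp' a ζ = -(J' a (ωsharp ζ)) := by
    intro a ζ
    have h0 : J' a (gsharp' a ζ + J' a (ωsharp ζ)) = 0 := by
      apply hinj
      intro x
      rw [map_add, map_add, hJ'sq, hJ'def]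
      rw [hgsharp' a ζ x, map_neg, hωsharp]
      ring
    have h1 := congrArg (J' a) h0
    rw [hJ'sq, map_zero, neg_eq_zero] at h1
    exact eq_neg_of_add_eq_zero_left h1
  -- conclusion
  intro ξ η
  congr 1
  simp only [hg, hg', hJ'def, map_neg, LinearMap.sum_apply, LinearMap.add_apply,
    LinearMap.smul_apply, map_add, map_smul, Fin.sum_univ_three, neg_smul, smul_add,
    smul_neg, smul_smul, neg_add]
  have hc1 : ∀ b : Fin 3, A 0 b * A 0 b + A 1 b * A 1 b + A 2 b * A 2 b = 1 := by
    intro b; simpa using hcol b b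
  have hc0 : ∀ b c : Fin 3, b ≠ c → A 0 b * A 0 c + A 1 b * A 1 c + A 2 b * A 2 c = 0 := by
    intro b c hbc; simpa [hbc] using hcol b c
  match_scalars <;>
    · simp only [smul_eq_mul]
      first
      | linear_combination (-(ξ (J 0 (ωsharp η)))) * hc1 0
          + (-(ξ (J 1 (ωsharp η)))) * hc0 1 0 (by decide)
          + (-(ξ (J 2 (ωsharp η)))) * hc0 2 0 (by decide)
      | linear_combination (-(ξ (J 0 (ωsharp η)))) * hc0 0 1 (by decide)
          + (-(ξ (J 1 (ωsharp η)))) * hc1 1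
          + (-(ξ (J 2 (ωsharp η)))) * hc0 2 1 (by decide)
      | linear_combination (-(ξ (J 0 (ωsharp η)))) * hc0 0 2 (by decide)
          + (-(ξ (J 1 (ωsharp η)))) * hc0 1 2 (by decide)
          + (-(ξ (J 2 (ωsharp η)))) * hc1 2
end

section
/- Let V be a real vector space with hypercomplex structure {J₁,J₂,J₃} and compatible scalar 2-form ω, with induced metrics gₐ(x,y) = ω(x, Jₐy). Then each gₐ is a nondegenerate symmetric bilinear form of split signature (2n, 2n), where dim V = 4n. -/
open Module

/-- An endomorphism squaring to `-1` is a linear equivalence. -/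
private def mkJequiv {V : Type*} [AddCommGroup V] [Module ℝ V]
    (f : V →ₗ[ℝ] V) (hf : ∀ x, f (f x) = -x) : V ≃ₗ[ℝ] V :=
  { f with
    invFun := fun x => -(f x)
    left_inv := fun x => by simp [hf x]
    right_inv := fun x => by simp [hf x] }

private lemma mkJequiv_apply {V : Type*} [AddCommGroup V] [Module ℝ V]
    (f : V →ₗ[ℝ] V) (hf : ∀ x, f (f x) = -x) (x : V) : mkJequiv f hf x = f x := rfl

/-- A nondegenerate symmetric bilinear form admitting an anti-isometry has split
signature. -/
private lemma split_signature {V : Type*} [AddCommGroup V] [Module ℝ V]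
    [FiniteDimensional ℝ V] {n : ℕ} (hdim : Module.finrank ℝ V = 4 * n)
    (g : LinearMap.BilinForm ℝ V) (hsymm : g.IsSymm)
    (hnd : ∀ x, (∀ y, g x y = 0) → x = 0)
    (K : V ≃ₗ[ℝ] V) (hK : ∀ x, g (K x) (K x) = -(g x x)) :
    ∃ P N : Submodule ℝ V, IsCompl P N ∧
      Module.finrank ℝ P = 2 * n ∧ Module.finrank ℝ N = 2 * n ∧
      (∀ x ∈ P, x ≠ 0 → 0 < g x x) ∧ (∀ x ∈ N, x ≠ 0 → g x x < 0) := by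
  obtain ⟨v, hv⟩ := LinearMap.BilinForm.exists_orthogonal_basis (LinearMap.BilinForm.isSymm_iff.1 hsymm)
  -- diagonal entries are nonzero
  have hd : ∀ i, g (v i) (v i) ≠ 0 := by
    intro i h0
    have hz : g (v i) = 0 := by
      apply v.ext
      intro j
      rcases eq_or_ne i j with rfl | hij
      · simpa using h0
      · simpa using hv hij
    exact v.ne_zero i (hnd (v i) fun y => by rw [hz]; rfl)
  -- the diagonal formula for the quadratic form
  have quad : ∀ x : V, g x x =
      ∑ i ∈ (v.repr x).support, (v.repr x i) * (v.repr x i) * g (v i) (v i) := by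
    intro x
    rw [← LinearMap.BilinForm.sum_repr_mul_repr_mul v x x, Finsupp.sum]
    refine Finset.sum_congr rfl fun i hi => ?_
    rw [Finsupp.sum]
    rw [Finset.sum_eq_single_of_mem i hi
      (fun j _ hji => by rw [hv (Ne.symm hji)]; simp)]
    simp only [smul_eq_mul]; ring
  set s : Set (Fin (finrank ℝ V)) := {i | 0 < g (v i) (v i)} with hs
  set P : Submodule ℝ V := Submodule.span ℝ (v '' s) with hP
  set N : Submodule ℝ V := Submodule.span ℝ (v '' sᶜ) with hN
  have hpos : ∀ x ∈ P, x ≠ 0 → 0 < g x x := by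
    intro x hx hx0
    have hsupp : ↑(v.repr x).support ⊆ s := v.mem_span_image.mp hx
    rw [quad x]
    apply Finset.sum_pos
    · intro i hi
      have hdi : 0 < g (v i) (v i) := hsupp hi
      have hci : v.repr x i ≠ 0 := Finsupp.mem_support_iff.mp hi
      exact mul_pos (mul_self_pos.mpr hci) hdi
    · rw [Finset.nonempty_iff_ne_empty]
      intro h
      apply hx0
      have := congrArg (Finsupp.linearCombination ℝ v) (Finsupp.support_eq_empty.mp h)
      rwa [v.linearCombination_repr, map_zero] at this
  have hneg : ∀ x ∈ N, x ≠ 0 → g x x < 0 := by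
    intro x hx hx0
    have hsupp : ↑(v.repr x).support ⊆ sᶜ := v.mem_span_image.mp hx
    rw [quad x]
    have hlt : ∀ i ∈ (v.repr x).support,
        (v.repr x i) * (v.repr x i) * g (v i) (v i) < 0 := by
      intro i hi
      have hdi : g (v i) (v i) < 0 :=
        lt_of_le_of_ne (le_of_not_gt (hsupp hi)) (hd i)
      have hci : v.repr x i ≠ 0 := Finsupp.mem_support_iff.mp hi
      exact mul_neg_of_pos_of_neg (mul_self_pos.mpr hci) hdi
    have hne : (v.repr x).support.Nonempty := by
      rw [Finset.nonempty_iff_ne_empty]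
      intro h
      apply hx0
      have := congrArg (Finsupp.linearCombination ℝ v) (Finsupp.support_eq_empty.mp h)
      rwa [v.linearCombination_repr, map_zero] at this
    calc (∑ i ∈ (v.repr x).support, (v.repr x i) * (v.repr x i) * g (v i) (v i))
        < ∑ _i ∈ (v.repr x).support, (0 : ℝ) :=
          Finset.sum_lt_sum_of_nonempty hne hlt
      _ = 0 := by simp
  have hcompl : IsCompl P N := by
    constructor
    · rw [Submodule.disjoint_def]
      intro x hxP hxN
      have h1 : ↑(v.repr x).support ⊆ s := v.mem_span_image.mp hxP
      have h2 : ↑(v.repr x).support ⊆ sᶜ := v.mem_span_image.mp hxN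
      have hre : v.repr x = 0 := by
        ext i
        by_contra hci
        have hi := Finsupp.mem_support_iff.mpr hci
        exact (h2 hi) (h1 hi)
      have := congrArg (Finsupp.linearCombination ℝ v) hre
      rwa [v.linearCombination_repr, map_zero] at this
    · rw [codisjoint_iff, hP, hN, ← Submodule.span_union, ← Set.image_union,
        Set.union_compl_self, Set.image_univ, v.span_eq]
  -- ranks
  have hsum : finrank ℝ P + finrank ℝ N = 4 * n := by
    rw [← hdim]; exact Submodule.finrank_add_eq_of_isCompl hcompl
  -- a positive-definite subspace is disjoint from N
  have hdisj : ∀ W : Submodule ℝ V, (∀ x ∈ W, x ≠ 0 → 0 < g x x) → Disjoint W N := by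
    intro W hW
    rw [Submodule.disjoint_def]
    intro x hxW hxN
    by_contra hx0
    exact absurd (hW x hxW hx0) (not_lt.mpr (le_of_lt (hneg x hxN hx0)))
  have hdisj' : ∀ W : Submodule ℝ V, (∀ x ∈ W, x ≠ 0 → g x x < 0) → Disjoint W P := by
    intro W hW
    rw [Submodule.disjoint_def]
    intro x hxW hxP
    by_contra hx0
    exact absurd (hW x hxW hx0) (not_lt.mpr (le_of_lt (hpos x hxP hx0)))
  have hdimle : ∀ W₁ W₂ : Submodule ℝ V, Disjoint W₁ W₂ →
      finrank ℝ W₁ + finrank ℝ W₂ ≤ 4 * n := by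
    intro W₁ W₂ hdw
    have := Submodule.finrank_sup_add_finrank_inf_eq W₁ W₂
    rw [disjoint_iff.mp hdw] at this
    simp only [finrank_bot, add_zero] at this
    rw [← this, ← hdim]
    exact Submodule.finrank_le _
  -- K maps N to a positive-definite subspace and P to a negative-definite one
  have hKN : ∀ x ∈ N.map (K : V →ₗ[ℝ] V), x ≠ 0 → 0 < g x x := by
    intro x hx hx0
    obtain ⟨y, hyN, rfl⟩ := hx
    have hy0 : y ≠ 0 := fun h => hx0 (by simp [h])
    have he : g ((K : V →ₗ[ℝ] V) y) ((K : V →ₗ[ℝ] V) y) = -(g y y) := hK y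
    rw [he]
    have := hneg y hyN hy0
    linarith
  have hKP : ∀ x ∈ P.map (K : V →ₗ[ℝ] V), x ≠ 0 → g x x < 0 := by
    intro x hx hx0
    obtain ⟨y, hyP, rfl⟩ := hx
    have hy0 : y ≠ 0 := fun h => hx0 (by simp [h])
    have he : g ((K : V →ₗ[ℝ] V) y) ((K : V →ₗ[ℝ] V) y) = -(g y y) := hK y
    rw [he]
    have := hpos y hyP hy0
    linarith
  have e1 : finrank ℝ (N.map (K : V →ₗ[ℝ] V)) = finrank ℝ N :=
    LinearEquiv.finrank_map_eq K N
  have e2 : finrank ℝ (P.map (K : V →ₗ[ℝ] V)) = finrank ℝ P :=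
    LinearEquiv.finrank_map_eq K P
  have le1 : finrank ℝ N + finrank ℝ N ≤ 4 * n := by
    have := hdimle _ _ (hdisj _ hKN); rwa [e1] at this
  have le2 : finrank ℝ P + finrank ℝ P ≤ 4 * n := by
    have := hdimle _ _ (hdisj' _ hKP); rwa [e2] at this
  have hPn : finrank ℝ P = 2 * n := by omega
  have hNn : finrank ℝ N = 2 * n := by omega
  exact ⟨P, N, hcompl, hPn, hNn, hpos, hneg⟩

/-- On a `4n`-dimensional real vector space with a hypercomplex structure `{J₁,J₂,J₃}`
and a compatible scalar 2-form `ω`, each induced bilinear form `gₐ(x,y) = ω(x, Jₐ y)` is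
symmetric, nondegenerate and of split signature `(2n, 2n)`. -/
theorem stmt_18 {V : Type*} [AddCommGroup V] [Module ℝ V] [FiniteDimensional ℝ V]
    {n : ℕ} (hdim : Module.finrank ℝ V = 4 * n)
    (J : Fin 3 → V →ₗ[ℝ] V)
    (hJsq : ∀ a x, J a (J a x) = -x)
    (hJ12 : ∀ x, J 0 (J 1 x) = J 2 x)
    (hJ21 : ∀ x, J 1 (J 0 x) = -(J 2 x))
    (ω : V →ₗ[ℝ] V →ₗ[ℝ] ℝ)
    (halt : ∀ x, ω x x = 0)
    (hnd : ∀ x, (∀ y, ω x y = 0) → x = 0)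
    (hcompat : ∀ a x y, ω (J a x) (J a y) = ω x y) :
    ∀ a : Fin 3,
      (∀ x y, ω x (J a y) = ω y (J a x)) ∧
      (∀ x, (∀ y, ω x (J a y) = 0) → x = 0) ∧
      ∃ P N : Submodule ℝ V, IsCompl P N ∧
        Module.finrank ℝ P = 2 * n ∧ Module.finrank ℝ N = 2 * n ∧
        (∀ x ∈ P, x ≠ 0 → 0 < ω x (J a x)) ∧
        (∀ x ∈ N, x ≠ 0 → ω x (J a x) < 0) := by
  -- antisymmetry of ω
  have hskew : ∀ x y, ω x y = -(ω y x) := by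
    intro x y
    have h := halt (x + y)
    simp only [map_add, LinearMap.add_apply, halt] at h
    linarith
  intro a
  -- symmetry of gₐ
  have hsymm : ∀ x y, ω x (J a y) = ω y (J a x) := by
    intro x y
    calc ω x (J a y) = ω (J a x) (J a (J a y)) := (hcompat a x (J a y)).symm
      _ = ω (J a x) (-y) := by rw [hJsq]
      _ = -(ω (J a x) y) := by rw [map_neg]
      _ = ω y (J a x) := by rw [← hskew]
  -- nondegeneracy of gₐ
  have hndg : ∀ x, (∀ y, ω x (J a y) = 0) → x = 0 := by
    intro x hx
    apply hnd
    intro z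
    have : z = J a (-(J a z)) := by rw [map_neg, hJsq, neg_neg]
    rw [this]
    exact hx _
  refine ⟨hsymm, hndg, ?_⟩
  -- find an anticommuting complex structure
  obtain ⟨b, hanti⟩ : ∃ b : Fin 3, ∀ x, J b (J a x) = -(J a (J b x)) := by
    fin_cases a
    · show ∃ b : Fin 3, ∀ x, J b (J 0 x) = -(J 0 (J b x))
      exact ⟨1, fun x => by rw [hJ21, hJ12]⟩
    · show ∃ b : Fin 3, ∀ x, J b (J 1 x) = -(J 1 (J b x))
      exact ⟨0, fun x => by rw [hJ12, hJ21, neg_neg]⟩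
    · show ∃ b : Fin 3, ∀ x, J b (J 2 x) = -(J 2 (J b x))
      refine ⟨0, fun x => ?_⟩
      have h1 : J 0 (J 2 x) = -(J 1 x) := by rw [← hJ12, hJsq]
      have h2 : J 2 (J 0 x) = J 1 x := by
        rw [← hJ12 (J 0 x), hJ21, map_neg, ← hJ12, hJsq, neg_neg]
      rw [h1, h2]
  -- set up the bilinear form and anti-isometry
  set g : LinearMap.BilinForm ℝ V := ω.compl₂ (J a) with hg
  have hgapp : ∀ x y, g x y = ω x (J a y) := fun x y => rfl
  have hgsymm : g.IsSymm := ⟨fun x y => hsymm x y⟩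
  have hgnd : ∀ x, (∀ y, g x y = 0) → x = 0 := fun x hx => hndg x hx
  set K : V ≃ₗ[ℝ] V := mkJequiv (J b) (hJsq b) with hKdef
  have hK : ∀ x, g (K x) (K x) = -(g x x) := by
    intro x
    rw [hKdef, mkJequiv_apply, hgapp, hgapp]
    have key : ω x (J a x) = -(ω (J b x) (J a (J b x))) := by
      rw [← hcompat b x (J a x), hanti, map_neg]
    linarith
  obtain ⟨P, N, hc, hp, hn, hpo, hne⟩ := split_signature hdim g hgsymm hgnd K hK
  exact ⟨P, N, hc, hp, hn, fun x hx h0 => hpo x hx h0, fun x hx h0 => hne x hx h0⟩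
end
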